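/- Let β > 0 and K > 0, and let n ∈ ℕ with n > max(βK, β²). Then max_{x ∈ [−K, K]} | f(x) − Q̃_n(x) | ≤ e^{−β²/2} [ ( e β K / n )^n + ( e β² / n )^{n/2} ]. -/

import Mathlib

open MeasureTheory ProbabilityTheory

/-- `P_n(x) = Σ_{k=0}^{n−1} x^k / k!`, the degree-`(n−1)` Taylor polynomial of `e^x`. -/
noncomputable def Pn (n : ℕ) (x : ℝ) : ℝ := ∑ k ∈ Finset.range n, x ^ k / (Nat.factorial k)

/-- `f(x) = exp(βx − β²/2) − 1`. -/
noncomputable def fβ (β x : ℝ) : ℝ := Real.exp (β * x - β ^ 2 / 2) - 1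

/-- `Q̃_n(x) = e^{−β²/2} (P_n(βx) − E[P_n(βχ)])`, where `χ ~ N(0,1)`. -/
noncomputable def Qt (β : ℝ) (n : ℕ) (x : ℝ) : ℝ :=
  Real.exp (-β ^ 2 / 2) * (Pn n (β * x) - ∫ t, Pn n (β * t) ∂(gaussianReal 0 1))

set_option maxHeartbeats 1000000

section Aux
open Real

lemma int_pow_gauss (k : ℕ) : Integrable (fun x : ℝ => x ^ k * Real.exp (-x^2/2)) := by
  have h := integrable_rpow_mul_exp_neg_mul_sq (b := 1/2) (by norm_num) (s := (k:ℝ))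
    (neg_one_lt_zero.trans_le (Nat.cast_nonneg k))
  have : (fun x : ℝ => x ^ (k:ℝ) * Real.exp (-(1/2) * x ^ 2)) = fun x : ℝ => x ^ k * Real.exp (-x^2/2) := by
    funext x; rw [Real.rpow_natCast]; ring_nf
  rwa [this] at h

noncomputable def Mi (k : ℕ) : ℝ := ∫ x : ℝ, x ^ k * Real.exp (-x^2/2)

lemma Mi_zero : Mi 0 = Real.sqrt (2 * Real.pi) := by
  have h := integral_gaussian (1/2)
  simp only [Mi, pow_zero, one_mul]
  rw [show (fun x : ℝ => Real.exp (-x^2/2)) = fun x : ℝ => Real.exp (-(1/2) * x^2) by funext x; ring_nf]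
  rw [h, show Real.pi/(1/2) = 2*Real.pi by ring]

lemma hasDerivAt_negsq (x : ℝ) : HasDerivAt (fun x : ℝ => -x^2/2) (-x) x := by
  have := ((hasDerivAt_pow 2 x).neg.div_const 2)
  refine this.congr_deriv ?_
  ring

lemma Mi_one : Mi 1 = 0 := by
  have hd : ∀ x : ℝ, HasDerivAt (fun x : ℝ => -Real.exp (-x^2/2)) (x * Real.exp (-x^2/2)) x := by
    intro x
    have := ((hasDerivAt_negsq x).exp).neg
    refine this.congr_deriv ?_
    ring
  have hf0 : Integrable (fun x : ℝ => Real.exp (-x^2/2)) := by simpa using int_pow_gauss 0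
  have := integral_eq_zero_of_hasDerivAt_of_integrable hd (by simpa using int_pow_gauss 1) hf0.neg
  simpa [Mi] using this

lemma Mi_rec (k : ℕ) : Mi (k + 2) = (k + 1) * Mi k := by
  have hd : ∀ x : ℝ, HasDerivAt (fun x : ℝ => x ^ (k+1) * Real.exp (-x^2/2))
      (((k:ℝ)+1) * (x ^ k * Real.exp (-x^2/2)) - x ^ (k+2) * Real.exp (-x^2/2)) x := by
    intro x
    have h2 := (hasDerivAt_pow (k+1) x).mul (hasDerivAt_negsq x).exp
    refine h2.congr_deriv ?_
    push_cast
    ring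
  have hf' : Integrable (fun x : ℝ => ((k:ℝ)+1) * (x ^ k * Real.exp (-x^2/2)) - x ^ (k+2) * Real.exp (-x^2/2)) :=
    ((int_pow_gauss k).const_mul ((k:ℝ)+1)).sub (int_pow_gauss (k+2))
  have h0 := integral_eq_zero_of_hasDerivAt_of_integrable hd hf' (int_pow_gauss (k+1))
  rw [integral_sub (((int_pow_gauss k).const_mul ((k:ℝ)+1))) (int_pow_gauss (k+2)),
    integral_const_mul] at h0
  have : ((k:ℝ)+1) * Mi k - Mi (k+2) = 0 := h0
  linarith

lemma pdf01 (x : ℝ) : gaussianPDFReal 0 1 x = (Real.sqrt (2*Real.pi))⁻¹ * Real.exp (-x^2/2) := by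
  simp [gaussianPDFReal]


lemma gamma_def : gaussianReal 0 1
    = MeasureTheory.Measure.withDensity volume (fun x => ((gaussianPDFReal 0 1 x).toNNReal : ENNReal)) := by
  rw [gaussianReal_of_var_ne_zero 0 one_ne_zero]
  rfl

lemma gauss_integral_eq (g : ℝ → ℝ) :
    ∫ x, g x ∂(gaussianReal 0 1) = (Real.sqrt (2*Real.pi))⁻¹ * ∫ x, Real.exp (-x^2/2) * g x := by
  rw [gamma_def, integral_withDensity_eq_integral_smul ((measurable_gaussianPDFReal 0 1).real_toNNReal) g]
  rw [← integral_const_mul]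
  congr 1
  funext x
  rw [NNReal.smul_def, smul_eq_mul, Real.coe_toNNReal _ (gaussianPDFReal_nonneg 0 1 x), pdf01]
  ring

lemma gauss_integrable_iff (g : ℝ → ℝ) :
    Integrable g (gaussianReal 0 1) ↔ Integrable (fun x => Real.exp (-x^2/2) * g x) := by
  rw [gamma_def, integrable_withDensity_iff_integrable_smul ((measurable_gaussianPDFReal 0 1).real_toNNReal)]
  have hne : (Real.sqrt (2*Real.pi)) ≠ 0 := by positivity
  constructor
  · intro h
    have := h.const_mul (Real.sqrt (2*Real.pi))
    apply this.congr
    filter_upwards with x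
    rw [NNReal.smul_def, smul_eq_mul, Real.coe_toNNReal _ (gaussianPDFReal_nonneg 0 1 x), pdf01]
    field_simp
  · intro h
    have := h.const_mul (Real.sqrt (2*Real.pi))⁻¹
    apply this.congr
    filter_upwards with x
    rw [NNReal.smul_def, smul_eq_mul, Real.coe_toNNReal _ (gaussianPDFReal_nonneg 0 1 x), pdf01]
    ring

lemma int_pow_gamma (k : ℕ) : Integrable (fun x : ℝ => x ^ k) (gaussianReal 0 1) := by
  rw [gauss_integrable_iff]
  exact (int_pow_gauss k).congr (by filter_upwards with x; ring)

lemma gauss_pow (k : ℕ) : ∫ x, x ^ k ∂(gaussianReal 0 1) = (Real.sqrt (2*Real.pi))⁻¹ * Mi k := by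
  rw [gauss_integral_eq]
  congr 1
  rw [Mi]
  congr 1; funext x; ring


lemma sqrt2pi_ne : (Real.sqrt (2*Real.pi)) ≠ 0 := by positivity

lemma gauss_pow_rec (k : ℕ) : ∫ x, x ^ (k+2) ∂(gaussianReal 0 1)
    = ((k:ℝ)+1) * ∫ x, x ^ k ∂(gaussianReal 0 1) := by
  rw [gauss_pow, gauss_pow, Mi_rec]; ring

lemma gauss_pow_even (m : ℕ) : ∫ x, x ^ (2*m) ∂(gaussianReal 0 1)
    = (Nat.factorial (2*m) : ℝ) / (2^m * Nat.factorial m) := by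
  induction m with
  | zero => simp [gauss_pow, Mi_zero, inv_mul_cancel₀ sqrt2pi_ne]
  | succ m ih =>
    have h : 2*(m+1) = 2*m + 2 := by ring
    rw [h, gauss_pow_rec, ih]
    have h1 : (Nat.factorial (2*m+2) : ℝ) = (2*m+2) * ((2*m+1) * Nat.factorial (2*m)) := by
      rw [show 2*m+2 = (2*m+1)+1 by ring, Nat.factorial_succ, Nat.factorial_succ]; push_cast; ring
    have h2 : (Nat.factorial (m+1) : ℝ) = (m+1) * Nat.factorial m := by
      rw [Nat.factorial_succ]; push_cast; ring
    have hf1 : (Nat.factorial (2*m) : ℝ) ≠ 0 := by exact_mod_cast (Nat.factorial_ne_zero _)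
    have hf2 : (Nat.factorial m : ℝ) ≠ 0 := by exact_mod_cast (Nat.factorial_ne_zero _)
    rw [h1, pow_succ, h2]
    push_cast
    field_simp

lemma gauss_pow_odd (m : ℕ) : ∫ x, x ^ (2*m+1) ∂(gaussianReal 0 1) = 0 := by
  induction m with
  | zero =>
    simp only [Nat.mul_zero, Nat.zero_add]
    rw [gauss_pow, Mi_one, mul_zero]
  | succ m ih =>
    have h : 2*(m+1)+1 = (2*m+1) + 2 := by ring
    rw [h, gauss_pow_rec, ih, mul_zero]

lemma sum_moments (β : ℝ) (n : ℕ) :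
    ∑ k ∈ Finset.range n, β^k/(Nat.factorial k : ℝ) * (∫ x, x^k ∂(gaussianReal 0 1))
      = ∑ m ∈ Finset.range ((n+1)/2), (β^2/2)^m/(Nat.factorial m : ℝ) := by
  induction n with
  | zero => simp
  | succ n ih =>
    rw [Finset.sum_range_succ, ih]
    rcases Nat.even_or_odd n with ⟨m, hm⟩ | ⟨m, hm⟩
    · subst hm
      have e1 : (m + m + 1 + 1)/2 = m + 1 := by omega
      have e2 : (m + m + 1)/2 = m := by omega
      rw [e1, e2, Finset.sum_range_succ]
      congr 1
      rw [show m + m = 2*m by ring, gauss_pow_even]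
      have hf1 : (Nat.factorial (2*m) : ℝ) ≠ 0 := by exact_mod_cast (Nat.factorial_ne_zero _)
      have hf2 : (Nat.factorial m : ℝ) ≠ 0 := by exact_mod_cast (Nat.factorial_ne_zero _)
      rw [pow_mul, div_pow]
      field_simp
    · subst hm
      have e1 : (2*m + 1 + 1 + 1)/2 = m + 1 := by omega
      have e2 : (2*m + 1 + 1)/2 = m + 1 := by omega
      rw [e1, e2, gauss_pow_odd, mul_zero, add_zero]

lemma exp_eq_tsum (y : ℝ) : Real.exp y = ∑' k : ℕ, y^k / (Nat.factorial k : ℝ) := by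
  rw [Real.exp_eq_exp_ℝ, NormedSpace.exp_eq_tsum_div]

lemma exp_sub_sum (y : ℝ) (n : ℕ) :
    Real.exp y - ∑ k ∈ Finset.range n, y^k/(Nat.factorial k : ℝ)
      = ∑' k : ℕ, y^(k+n)/(Nat.factorial (k+n) : ℝ) := by
  have hs := Real.summable_pow_div_factorial y
  have h := Summable.sum_add_tsum_nat_add (f := fun k => y^k/(Nat.factorial k : ℝ)) n hs
  rw [exp_eq_tsum, ← h]
  ring

lemma tail_le (c t : ℝ) (hc : 0 < c) (ht : 0 ≤ t) (htc : t ≤ c) (M : ℕ) (hM : c ≤ M) :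
    ∑' k : ℕ, t^(k+M)/(Nat.factorial (k+M) : ℝ) ≤ (t / c) ^ c * Real.exp c := by
  have hsum_t : Summable (fun k : ℕ => t^(k+M)/(Nat.factorial (k+M) : ℝ)) :=
    (summable_nat_add_iff M).2 (Real.summable_pow_div_factorial t)
  have hsum_c : Summable (fun k : ℕ => c^(k+M)/(Nat.factorial (k+M) : ℝ)) :=
    (summable_nat_add_iff M).2 (Real.summable_pow_div_factorial c)
  have hpt : ∀ k : ℕ, t^(k+M)/(Nat.factorial (k+M) : ℝ)
      ≤ (t/c)^c * (c^(k+M)/(Nat.factorial (k+M) : ℝ)) := by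
    intro k
    have hkM : c ≤ ((k+M : ℕ) : ℝ) := by
      refine hM.trans ?_
      exact_mod_cast Nat.le_add_left M k
    have hne : c + (((k+M : ℕ) : ℝ) - c) ≠ 0 := by
      have : (0:ℝ) < ((k+M : ℕ) : ℝ) := hc.trans_le hkM
      intro h; rw [add_sub_cancel] at h; linarith
    have e0 : c + (((k+M : ℕ) : ℝ) - c) = ((k+M : ℕ) : ℝ) := by ring
    have e1 : t ^ ((k+M:ℕ):ℝ) = t ^ c * t ^ (((k+M:ℕ):ℝ) - c) := by
      rw [← Real.rpow_add' ht hne, e0]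
    have h1 : t^((k+M : ℕ) : ℝ) ≤ t^c * c^(((k+M : ℕ) : ℝ) - c) := by
      rw [e1]
      exact mul_le_mul_of_nonneg_left (Real.rpow_le_rpow ht htc (by linarith)) (Real.rpow_nonneg ht c)
    rw [Real.rpow_sub hc] at h1
    rw [← Real.rpow_natCast t (k+M), ← Real.rpow_natCast c (k+M)]
    have hfac : (0:ℝ) < (Nat.factorial (k+M) : ℝ) := by exact_mod_cast Nat.factorial_pos _
    rw [div_le_iff₀ hfac]
    calc t ^ ((k+M : ℕ) : ℝ) ≤ t^c * (c^((k+M:ℕ):ℝ) / c^c) := h1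
    _ = (t/c)^c * c^((k+M:ℕ):ℝ) := by rw [Real.div_rpow ht hc.le]; ring
    _ = (t/c)^c * (c^((k+M:ℕ):ℝ) / (Nat.factorial (k+M) : ℝ)) * (Nat.factorial (k+M) : ℝ) := by
        field_simp
  calc ∑' k : ℕ, t^(k+M)/(Nat.factorial (k+M) : ℝ)
      ≤ ∑' k : ℕ, (t/c)^c * (c^(k+M)/(Nat.factorial (k+M) : ℝ)) :=
        Summable.tsum_le_tsum hpt hsum_t (hsum_c.mul_left _)
    _ = (t/c)^c * ∑' k : ℕ, c^(k+M)/(Nat.factorial (k+M) : ℝ) := tsum_mul_left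
    _ ≤ (t/c)^c * Real.exp c := by
        refine mul_le_mul_of_nonneg_left ?_ (Real.rpow_nonneg (div_nonneg ht hc.le) c)
        have h := exp_sub_sum c M
        have hpart : 0 ≤ ∑ k ∈ Finset.range M, c^k/(Nat.factorial k : ℝ) := by
          apply Finset.sum_nonneg
          intro i _
          positivity
        linarith [h]

lemma tail_le' (c t : ℝ) (hc : 0 < c) (ht : 0 ≤ t) (htc : t ≤ c) (M : ℕ) (hM : c ≤ M) :
    ∑' k : ℕ, t^(k+M)/(Nat.factorial (k+M) : ℝ) ≤ (Real.exp 1 * t / c) ^ c := by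
  refine (tail_le c t hc ht htc M hM).trans_eq ?_
  rw [show Real.exp 1 * t / c = (t/c) * Real.exp 1 by ring,
    Real.mul_rpow (div_nonneg ht hc.le) (Real.exp_pos 1).le, Real.exp_one_rpow]

lemma EPn (β : ℝ) (n : ℕ) :
    ∫ x, Pn n (β * x) ∂(gaussianReal 0 1)
      = ∑ m ∈ Finset.range ((n+1)/2), (β^2/2)^m/(Nat.factorial m : ℝ) := by
  rw [← sum_moments β n]
  have hint : ∀ k ∈ Finset.range n, Integrable (fun x : ℝ => (β*x)^k/(Nat.factorial k : ℝ))
      (gaussianReal 0 1) := by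
    intro k _
    refine ((int_pow_gamma k).const_mul (β^k/(Nat.factorial k : ℝ))).congr ?_
    filter_upwards with x
    rw [mul_pow]; ring
  have : ∫ x, Pn n (β * x) ∂(gaussianReal 0 1)
      = ∑ k ∈ Finset.range n, ∫ x, (β*x)^k/(Nat.factorial k : ℝ) ∂(gaussianReal 0 1) := by
    rw [← integral_finset_sum _ hint]
    rfl
  rw [this]
  refine Finset.sum_congr rfl fun k _ => ?_
  rw [show (fun x : ℝ => (β*x)^k/(Nat.factorial k : ℝ))
      = fun x : ℝ => (β^k/(Nat.factorial k : ℝ)) * x^k by funext x; rw [mul_pow]; ring,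
    integral_const_mul]


end Aux

/-- Let `β, K > 0` and `n ∈ ℕ` with `n > max(βK, β²)`. Then
`max_{x ∈ [−K,K]} |f(x) − Q̃_n(x)| ≤ e^{−β²/2} ((eβK/n)^n + (eβ²/n)^{n/2})`. -/
theorem stmt15 (β K : ℝ) (hβ : 0 < β) (hK : 0 < K) (n : ℕ)
    (hn : max (β * K) (β ^ 2) < n) :
    ∀ x ∈ Set.Icc (-K) K,
      |fβ β x - Qt β n x| ≤
        Real.exp (-β ^ 2 / 2) *
          ((Real.exp 1 * β * K / n) ^ n + (Real.exp 1 * β ^ 2 / n) ^ ((n : ℝ) / 2)) := by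
  intro x hx
  obtain ⟨hx1, hx2⟩ := hx
  have hβK : β * K < n := (le_max_left _ _).trans_lt hn
  have hβ2 : β ^ 2 < n := (le_max_right _ _).trans_lt hn
  have hn0 : (0:ℝ) < n := lt_trans (by positivity) hβK
  have hnn : n ≠ 0 := (Nat.cast_pos.mp hn0).ne'
  set M : ℕ := (n+1)/2 with hM
  -- first bound
  have h1 : |Real.exp (β*x) - Pn n (β*x)| ≤ (Real.exp 1 * β * K / n) ^ n := by
    have he := exp_sub_sum (β*x) n
    have habs : ∀ k : ℕ, |(β*x)^(k+n)/(Nat.factorial (k+n) : ℝ)|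
        = |β*x|^(k+n)/(Nat.factorial (k+n) : ℝ) := by
      intro k
      rw [abs_div, abs_pow, Nat.abs_cast]
    have hsum1 : Summable (fun k : ℕ => |β*x|^(k+n)/(Nat.factorial (k+n) : ℝ)) :=
      (summable_nat_add_iff n).2 (Real.summable_pow_div_factorial _)
    have hsum2 : Summable (fun k : ℕ => (β*K)^(k+n)/(Nat.factorial (k+n) : ℝ)) :=
      (summable_nat_add_iff n).2 (Real.summable_pow_div_factorial _)
    have hxK : |β*x| ≤ β*K := by
      rw [abs_mul, abs_of_pos hβ]
      exact mul_le_mul_of_nonneg_left (abs_le.2 ⟨hx1, hx2⟩) hβ.le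
    calc |Real.exp (β*x) - Pn n (β*x)|
        = |∑' k : ℕ, (β*x)^(k+n)/(Nat.factorial (k+n) : ℝ)| := by rw [Pn, he]
      _ ≤ ∑' k : ℕ, |(β*x)^(k+n)/(Nat.factorial (k+n) : ℝ)| := by
          have hsum_abs : Summable (fun k : ℕ => |(β*x)^(k+n)/(Nat.factorial (k+n) : ℝ)|) :=
            hsum1.congr fun k => (habs k).symm
          have h := norm_tsum_le_tsum_norm (f := fun k : ℕ => (β*x)^(k+n)/(Nat.factorial (k+n) : ℝ))
            (hsum_abs.congr (fun k => (Real.norm_eq_abs _).symm))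
          simp only [Real.norm_eq_abs] at h
          exact h
      _ = ∑' k : ℕ, |β*x|^(k+n)/(Nat.factorial (k+n) : ℝ) := by
          refine tsum_congr fun k => habs k
      _ ≤ ∑' k : ℕ, (β*K)^(k+n)/(Nat.factorial (k+n) : ℝ) := by
          refine Summable.tsum_le_tsum (fun k => ?_) hsum1 hsum2
          gcongr
      _ ≤ (Real.exp 1 * (β*K) / n) ^ (n:ℝ) :=
          tail_le' n (β*K) hn0 (by positivity) hβK.le n le_rfl
      _ = (Real.exp 1 * β * K / n) ^ n := by
          rw [← mul_assoc, Real.rpow_natCast]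
  -- second bound
  have hD := exp_sub_sum (β^2/2) M
  rw [← EPn β n] at hD
  have hD0 : 0 ≤ Real.exp (β^2/2) - ∫ t, Pn n (β*t) ∂(gaussianReal 0 1) := by
    rw [hD]
    refine tsum_nonneg fun k => by positivity
  have hMn : (n:ℝ)/2 ≤ (M:ℕ) := by
    have : n ≤ 2*M := by omega
    have : (n:ℝ) ≤ 2*(M:ℝ) := by exact_mod_cast this
    linarith
  have h2 : Real.exp (β^2/2) - ∫ t, Pn n (β*t) ∂(gaussianReal 0 1)
      ≤ (Real.exp 1 * β^2 / n) ^ ((n:ℝ)/2) := by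
    rw [hD]
    have := tail_le' ((n:ℝ)/2) (β^2/2) (by positivity) (by positivity) (by linarith) M hMn
    refine this.trans_eq ?_
    congr 1
    field_simp
  -- assembly
  have key : fβ β x - Qt β n x
      = Real.exp (-β^2/2) * ((Real.exp (β*x) - Pn n (β*x))
        - (Real.exp (β^2/2) - ∫ t, Pn n (β*t) ∂(gaussianReal 0 1))) := by
    have h1' : Real.exp (-β^2/2) * Real.exp (β^2/2) = 1 := by
      rw [← Real.exp_add, show -β^2/2 + β^2/2 = 0 by ring, Real.exp_zero]
    have hexp : Real.exp (β*x - β^2/2) = Real.exp (-β^2/2) * Real.exp (β*x) := by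
      rw [← Real.exp_add]; ring_nf
    rw [fβ, Qt, hexp]
    linear_combination h1'
  rw [key, abs_mul, abs_of_pos (Real.exp_pos _)]
  refine mul_le_mul_of_nonneg_left ?_ (Real.exp_pos _).le
  calc |(Real.exp (β*x) - Pn n (β*x)) - (Real.exp (β^2/2) - ∫ t, Pn n (β*t) ∂(gaussianReal 0 1))|
      ≤ |Real.exp (β*x) - Pn n (β*x)| + |Real.exp (β^2/2) - ∫ t, Pn n (β*t) ∂(gaussianReal 0 1)| :=
        abs_sub _ _
    _ ≤ (Real.exp 1 * β * K / n) ^ n + (Real.exp 1 * β ^ 2 / n) ^ ((n : ℝ) / 2) := by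
        refine add_le_add h1 ?_
        rw [abs_of_nonneg hD0]
        exact h2
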